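/- Let W₁(s) and W₂(s) be two reflected processes driven by the same increments of a common increment process R after time t₀, with W₁(t₀) ≥ W₂(t₀) ≥ 0. Then W₁(s) ≥ W₂(s) for all s ≥ t₀; moreover, if W₁(τ) = 0 for some τ ≥ t₀, then W₁(s) = W₂(s) for all s ≥ τ. -/

import Mathlib

/-- On a compact interval, a continuous function attains its infimum, and the
infimum of a constant shift is the constant plus the infimum. -/
lemma shift_sInf (R : ℝ → ℝ) (hR : Continuous R) (t₀ t : ℝ) (ht : t₀ ≤ t) (w : ℝ) :
    sInf ((fun s => w + R s) '' Set.Icc t₀ t)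
      = w + sInf (R '' Set.Icc t₀ t) := by
  obtain ⟨x, hx, hmin⟩ := isCompact_Icc.exists_isMinOn (Set.nonempty_Icc.2 ht)
    (hR.continuousOn (s := Set.Icc t₀ t))
  have h1 : IsLeast (R '' Set.Icc t₀ t) (R x) :=
    ⟨⟨x, hx, rfl⟩, by rintro _ ⟨y, hy, rfl⟩; exact hmin hy⟩
  have h2 : IsLeast ((fun s => w + R s) '' Set.Icc t₀ t) (w + R x) :=
    ⟨⟨x, hx, rfl⟩, by rintro _ ⟨y, hy, rfl⟩; exact add_le_add_right (hmin hy) w⟩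
  rw [h1.csInf_eq, h2.csInf_eq]

lemma sInf_le_of_mem (R : ℝ → ℝ) (hR : Continuous R) (t₀ t s : ℝ) (hs : s ∈ Set.Icc t₀ t) :
    sInf (R '' Set.Icc t₀ t) ≤ R s := by
  have hbdd : BddBelow (R '' Set.Icc t₀ t) :=
    (isCompact_Icc.image hR).bddBelow
  exact csInf_le hbdd ⟨s, hs, rfl⟩

theorem stmt_14 (R : ℝ → ℝ) (hR : Continuous R) (t₀ : ℝ)
    (w₁ w₂ : ℝ) (hw₂ : 0 ≤ w₂) (hw : w₂ ≤ w₁)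
    (W₁ W₂ : ℝ → ℝ)
    (hW₁ : ∀ t ≥ t₀, W₁ t =
      w₁ + R t - min 0 (sInf ((fun s => w₁ + R s) '' Set.Icc t₀ t)))
    (hW₂ : ∀ t ≥ t₀, W₂ t =
      w₂ + R t - min 0 (sInf ((fun s => w₂ + R s) '' Set.Icc t₀ t)))
    (hRt₀ : R t₀ = 0) :
    (∀ t ≥ t₀, W₂ t ≤ W₁ t) ∧
    (∀ τ ≥ t₀, W₁ τ = 0 → ∀ s ≥ τ, W₁ s = W₂ s) := by
  set I : ℝ → ℝ := fun t => sInf (R '' Set.Icc t₀ t) with hI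
  have hIle : ∀ t ≥ t₀, ∀ s ∈ Set.Icc t₀ t, I t ≤ R s := fun t ht s hs =>
    sInf_le_of_mem R hR t₀ t s hs
  have hI0 : ∀ t ≥ t₀, I t ≤ 0 := fun t ht => by
    have := hIle t ht t₀ ⟨le_refl _, ht⟩; rwa [hRt₀] at this
  have hW₁' : ∀ t ≥ t₀, W₁ t = w₁ + R t - min 0 (w₁ + I t) := fun t ht => by
    rw [hW₁ t ht, shift_sInf R hR t₀ t ht]
  have hW₂' : ∀ t ≥ t₀, W₂ t = w₂ + R t - min 0 (w₂ + I t) := fun t ht => by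
    rw [hW₂ t ht, shift_sInf R hR t₀ t ht]
  constructor
  · intro t ht
    rw [hW₁' t ht, hW₂' t ht]
    have : min 0 (w₁ + I t) ≤ min 0 (w₂ + I t) + (w₁ - w₂) := by
      rcases le_total 0 (w₂ + I t) with h | h <;> rcases le_total 0 (w₁ + I t) with h' | h' <;>
        simp only [min_eq_left, min_eq_right, h, h'] <;> linarith
    linarith
  · intro τ hτ hτ0 s hs
    have hsτ₀ : t₀ ≤ s := le_trans hτ hs
    -- From W₁ τ = 0: w₁ + R τ = min 0 (w₁ + I τ)
    have h1 : w₁ + R τ = min 0 (w₁ + I τ) := by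
      have := hW₁' τ hτ; rw [hτ0] at this; linarith [this]
    have hIR : I τ ≤ R τ := hIle τ hτ τ ⟨hτ, le_refl _⟩
    have hmin : min 0 (w₁ + I τ) ≤ w₁ + I τ := min_le_right _ _
    -- hence w₁ + I τ ≤ 0
    have hw₁Iτ : w₁ + I τ ≤ 0 := by
      by_contra h
      push_neg at h
      have : min 0 (w₁ + I τ) ≤ 0 := min_le_left _ _
      linarith
    -- I s ≤ I τ by monotonicity (Icc t₀ τ ⊆ Icc t₀ s)
    have hIs : I s ≤ I τ := by
      apply csInf_le_csInf ((isCompact_Icc.image hR).bddBelow)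
      · exact (Set.nonempty_Icc.2 hτ).image R
      · exact Set.image_mono (f := R) (Set.Icc_subset_Icc_right hs)
    have h₁s : w₁ + I s ≤ 0 := by linarith
    have h₂s : w₂ + I s ≤ 0 := by linarith
    rw [hW₁' s hsτ₀, hW₂' s hsτ₀, min_eq_right h₁s, min_eq_right h₂s]
    ring
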